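/- arXiv:2303.08099 — 5 statements merged into one kernel-verified Lean document; each statement's English description precedes it below -/
import Mathlib

section
/- For any real numbers θ₁, ..., θ_t and any t(t-1)/2 + 1 distinct primes p₁ < p₂ < ... < p_{t(t-1)/2+1}, there exists at least one prime p_l among them such that for all indices 1 ≤ i ≤ j ≤ t and all integers k not divisible by p_l, we have ||θ_i - θ_j| - k/p_l| ≥ 1/(2 p_{t(t-1)/2} p_{t(t-1)/2+1}). -/
open scoped BigOperators

lemma aux_two_close (q q' P : ℕ) (hq : 0 < q) (hq' : 0 < q')
    (hle : q * q' ≤ P) (D : ℝ) (k k' : ℤ) (hne : k * q' ≠ k' * q)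
    (h1 : |D - (k : ℝ) / q| < 1 / (2 * P))
    (h2 : |D - (k' : ℝ) / q'| < 1 / (2 * P)) : False := by
  have hP : 0 < P := lt_of_lt_of_le (Nat.mul_pos hq hq') hle
  have hqR : (0:ℝ) < q := by exact_mod_cast hq
  have hq'R : (0:ℝ) < q' := by exact_mod_cast hq'
  have hPR : (0:ℝ) < P := by exact_mod_cast hP
  have hdiff : (k:ℝ)/q - (k':ℝ)/q' = ((k * q' - k' * q : ℤ) : ℝ) / ((q:ℝ) * q') := by
    push_cast
    field_simp
  have habs : (1:ℝ) ≤ |((k * q' - k' * q : ℤ) : ℝ)| := by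
    have h0 : (1:ℤ) ≤ |k * q' - k' * q| := Int.one_le_abs (sub_ne_zero.mpr hne)
    calc (1:ℝ) = ((1:ℤ):ℝ) := by norm_num
    _ ≤ ((|k * q' - k' * q| : ℤ) : ℝ) := by exact_mod_cast h0
    _ = |((k * q' - k' * q : ℤ) : ℝ)| := by push_cast; rfl
  have hlow : (1:ℝ)/P ≤ |(k:ℝ)/q - (k':ℝ)/q'| := by
    rw [hdiff, abs_div, abs_of_pos (by positivity : (0:ℝ) < (q:ℝ)*q')]
    have step1 : (1:ℝ)/P ≤ 1/((q:ℝ)*q') := by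
      apply one_div_le_one_div_of_le (by positivity)
      exact_mod_cast hle
    refine step1.trans ?_
    gcongr
  have htri : |(k:ℝ)/q - (k':ℝ)/q'| < 1/P := by
    have h3 : |(k:ℝ)/q - (k':ℝ)/q'| ≤ |D - (k:ℝ)/q| + |D - (k':ℝ)/q'| := by
      have h4 : (k:ℝ)/q - (k':ℝ)/q' = (D - (k':ℝ)/q') - (D - (k:ℝ)/q) := by ring
      rw [h4]
      calc |(D - (k':ℝ)/q') - (D - (k:ℝ)/q)| ≤ |D - (k':ℝ)/q'| + |D - (k:ℝ)/q| :=
            abs_sub _ _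
      _ = |D - (k:ℝ)/q| + |D - (k':ℝ)/q'| := by ring
    have : |(k:ℝ)/q - (k':ℝ)/q'| < 1/(2*P) + 1/(2*P) := by linarith
    have hPne : (P:ℝ) ≠ 0 := ne_of_gt hPR
    have heq : (1:ℝ)/(2*P) + 1/(2*P) = 1/P := by
      rw [← add_div, div_eq_div_iff (by positivity) hPne]
      ring
    linarith
  linarith

lemma aux_single (q P : ℕ) (hq : 0 < q) (hle : q ≤ 2 * P) (k : ℤ) (hk : k ≠ 0)
    (h : |(0:ℝ) - (k:ℝ)/q| < 1/(2*P)) : False := by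
  have hP : 0 < P := by omega
  have hqR : (0:ℝ) < q := by exact_mod_cast hq
  have hPR : (0:ℝ) < P := by exact_mod_cast hP
  have h1 : |(0:ℝ) - (k:ℝ)/q| = |(k:ℝ)|/q := by
    rw [zero_sub, abs_neg, abs_div, abs_of_pos hqR]
  have h2 : (1:ℝ) ≤ |(k:ℝ)| := by
    have := Int.one_le_abs hk
    calc (1:ℝ) = ((1:ℤ):ℝ) := by norm_num
    _ ≤ ((|k| : ℤ) : ℝ) := by exact_mod_cast this
    _ = |(k:ℝ)| := by push_cast; rfl
  have h3 : (1:ℝ)/(2*P) ≤ 1/q := by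
    apply one_div_le_one_div_of_le hqR
    exact_mod_cast hle
  have h4 : (1:ℝ)/q ≤ |(k:ℝ)|/q := by gcongr
  rw [h1] at h
  linarith

theorem stmt0 (t : ℕ) (ht : 0 < t) (θ : Fin t → ℝ) (p : ℕ → ℕ)
    (hp0 : p 0 = 1)
    (hprime : ∀ l, 1 ≤ l → l ≤ t * (t - 1) / 2 + 1 → Nat.Prime (p l))
    (hmono : ∀ l l', 1 ≤ l → l < l' → l' ≤ t * (t - 1) / 2 + 1 → p l < p l') :
    ∃ l, 1 ≤ l ∧ l ≤ t * (t - 1) / 2 + 1 ∧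
      ∀ i j : Fin t, i ≤ j → ∀ k : ℤ, ¬ ((p l : ℤ) ∣ k) →
        (1 : ℝ) / (2 * p (t * (t - 1) / 2) * p (t * (t - 1) / 2 + 1)) ≤
          |(|θ i - θ j|) - (k : ℝ) / (p l)| := by
  by_contra hcon
  push_neg at hcon
  set M := t * (t - 1) / 2 with hM
  set P := p M * p (M + 1) with hP
  -- basic facts about primes
  have hp2 : ∀ l, 1 ≤ l → l ≤ M + 1 → 2 ≤ p l := fun l h1 h2 => (hprime l h1 h2).two_le
  have hpM1 : ∀ l, 1 ≤ l → l ≤ M + 1 → p l ≤ p (M + 1) := by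
    intro l h1 h2
    rcases eq_or_lt_of_le h2 with h | h
    · rw [h]
    · exact le_of_lt (hmono l (M + 1) h1 h le_rfl)
  have hpMpos : 0 < p M := by
    rcases Nat.eq_zero_or_pos M with h | h
    · rw [h, hp0]; norm_num
    · exact (hprime M h (Nat.le_succ M)).pos
  have hpMle : ∀ l, 1 ≤ l → l ≤ M → p l ≤ p M := by
    intro l h1 h2
    rcases eq_or_lt_of_le h2 with h | h
    · rw [h]
    · exact le_of_lt (hmono l M h1 h (Nat.le_succ M))
  have hPpos : 0 < P := Nat.mul_pos hpMpos (hprime (M + 1) (by omega) le_rfl).pos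
  -- rewrite the bound
  have hεeq : (1 : ℝ) / (2 * (p M : ℝ) * (p (M + 1) : ℝ)) = 1 / (2 * (P : ℝ)) := by
    rw [hP]; push_cast; ring_nf
  -- totalize the choice
  have hcon' : ∀ l : ℕ, ∃ (i j : Fin t) (k : ℤ),
      1 ≤ l → l ≤ M + 1 → i ≤ j ∧ ¬ ((p l : ℤ) ∣ k) ∧
        |(|θ i - θ j|) - (k : ℝ) / (p l)| < 1 / (2 * (P : ℝ)) := by
    intro l
    by_cases h1 : 1 ≤ l ∧ l ≤ M + 1
    · obtain ⟨i, j, hij, k, hk, hlt⟩ := hcon l h1.1 h1.2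
      rw [hεeq] at hlt
      exact ⟨i, j, k, fun _ _ => ⟨hij, hk, hlt⟩⟩
    · exact ⟨⟨0, ht⟩, ⟨0, ht⟩, 0, fun ha hb => absurd ⟨ha, hb⟩ h1⟩
  choose I J K hIJK using hcon'
  -- each chosen pair is strict
  have hIJlt : ∀ l, 1 ≤ l → l ≤ M + 1 → I l < J l := by
    intro l h1 h2
    obtain ⟨hij, hk, hlt⟩ := hIJK l h1 h2
    rcases lt_or_eq_of_le hij with h | h
    · exact h
    · exfalso
      rw [h, sub_self, abs_zero] at hlt
      have hk0 : K l ≠ 0 := fun h0 => hk (h0 ▸ dvd_zero _)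
      have hqle : p l ≤ 2 * P := by
        have h5 := hpM1 l h1 h2
        rw [hP]
        nlinarith [hpMpos]
      exact aux_single (p l) P (hprime l h1 h2).pos hqle (K l) hk0 hlt
  -- injectivity of l ↦ {I l, J l}
  have hmain : ∀ l l', 1 ≤ l → l < l' → l' ≤ M + 1 →
      ({I l, J l} : Finset (Fin t)) = {I l', J l'} → False := by
    intro l l' h1 hll' h2 heqset
    have hl2 : l ≤ M + 1 := by omega
    have hl'1 : 1 ≤ l' := by omega
    obtain ⟨_, hk, hlt⟩ := hIJK l h1 hl2
    obtain ⟨_, hk', hlt'⟩ := hIJK l' hl'1 h2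
    have hIJ : I l < J l := hIJlt l h1 hl2
    have hIJ' : I l' < J l' := hIJlt l' hl'1 h2
    -- extract component equalities
    have hset : ({I l, J l} : Set (Fin t)) = {I l', J l'} := by
      have := congrArg (fun s : Finset (Fin t) => (s : Set (Fin t))) heqset
      simpa using this
    rw [Set.pair_eq_pair_iff] at hset
    obtain ⟨hI, hJ⟩ : I l = I l' ∧ J l = J l' := by
      rcases hset with ⟨h3, h4⟩ | ⟨h3, h4⟩
      · exact ⟨h3, h4⟩
      · exfalso
        rw [h3] at hIJ
        rw [h4] at hIJ
        exact absurd (hIJ.trans hIJ') (lt_irrefl _)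
    rw [← hI, ← hJ] at hlt'
    -- the two fractions are distinct
    have hplpr : Nat.Prime (p l) := hprime l h1 hl2
    have hplpr' : Nat.Prime (p l') := hprime l' hl'1 h2
    have hplt : p l < p l' := hmono l l' h1 hll' h2
    have hne : K l * (p l' : ℤ) ≠ K l' * (p l : ℤ) := by
      intro heq
      have hdvd : (p l : ℤ) ∣ K l * (p l' : ℤ) := ⟨K l', by linarith [heq]⟩
      have hpZ : Prime ((p l : ℤ)) := Nat.prime_iff_prime_int.mp hplpr
      rcases hpZ.dvd_mul.mp hdvd with h | h
      · exact hk h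
      · have : p l ∣ p l' := Int.ofNat_dvd.mp (by exact_mod_cast h)
        have := (Nat.prime_dvd_prime_iff_eq hplpr hplpr').mp this
        omega
    have hle : p l * p l' ≤ P := by
      rw [hP]
      exact Nat.mul_le_mul (hpMle l h1 (by omega)) (hpM1 l' hl'1 h2)
    exact aux_two_close (p l) (p l') P hplpr.pos hplpr'.pos hle
      (|θ (I l) - θ (J l)|) (K l) (K l') hne hlt hlt'
  -- pigeonhole
  have hmaps : ∀ l ∈ Finset.Icc 1 (M + 1),
      ({I l, J l} : Finset (Fin t)) ∈ Finset.powersetCard 2 (Finset.univ : Finset (Fin t)) := by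
    intro l hl
    rw [Finset.mem_Icc] at hl
    rw [Finset.mem_powersetCard]
    refine ⟨Finset.subset_univ _, ?_⟩
    exact Finset.card_pair (ne_of_lt (hIJlt l hl.1 hl.2))
  have hinj : Set.InjOn (fun l => ({I l, J l} : Finset (Fin t))) (Finset.Icc 1 (M + 1)) := by
    intro l hl l' hl' heq
    simp only [Finset.coe_Icc, Set.mem_Icc] at hl hl'
    by_contra hne
    rcases lt_or_gt_of_ne hne with h | h
    · exact hmain l l' hl.1 h hl'.2 heq
    · exact hmain l' l hl'.1 h hl.2 heq.symm
  have hcard := Finset.card_le_card_of_injOn _ hmaps hinj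
  rw [Nat.card_Icc, Finset.card_powersetCard, Finset.card_univ, Fintype.card_fin,
    Nat.choose_two_right] at hcard
  omega
end

section
/- Let M > 0 and let G = ⋃_{i=1}^t [θ_i - ζ_i/M, θ_i + ζ_i/M] be a union of t ≤ S pairwise disjoint intervals with Σ_{i=1}^t ζ_i ≤ Sζ, where all ζ_i > 0. If ζ ≤ 1/(8S(2S-1)), then there exists m ∈ [2,4] such that for all 1 ≤ i, j ≤ t and all nonzero integers q, the translated interval [θ_i - ζ_i/M - q/(Mm), θ_i + ζ_i/M - q/(Mm)] is disjoint from [θ_j - ζ_j/M, θ_j + ζ_j/M]; equivalently, (G + q/(Mm)) ∩ G = ∅ for every nonzero integer q. -/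
open MeasureTheory

open scoped BigOperators

lemma pair_bound (D ε : ℝ) (hε : 0 < ε) (hε' : ε ≤ 1/24) :
    ∑' q : ℕ, volume {u : ℝ | u ∈ Set.Icc (1/4 : ℝ) (1/2) ∧ |((q:ℝ)+1)*u - D| ≤ ε}
      ≤ ENNReal.ofReal (3*ε) := by
  by_cases hD : D ≤ 1/2 + ε
  · -- only q = 0, 1 matter
    rw [tsum_eq_sum (s := ({0,1} : Finset ℕ)) ?_]
    · rw [Finset.sum_pair (by norm_num : (0:ℕ) ≠ 1)]
      have h0 : volume {u : ℝ | u ∈ Set.Icc (1/4 : ℝ) (1/2) ∧ |(((0:ℕ):ℝ)+1)*u - D| ≤ ε}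
          ≤ ENNReal.ofReal (2*ε) := by
        refine le_trans (measure_mono (?_ : _ ⊆ Set.Icc (D-ε) (D+ε))) ?_
        · rintro u ⟨hu, habs⟩
          norm_num at habs
          have h := abs_le.1 habs
          exact Set.mem_Icc.2 ⟨by linarith [h.1], by linarith [h.2]⟩
        · rw [Real.volume_Icc]
          exact ENNReal.ofReal_le_ofReal (by linarith)
      have h1 : volume {u : ℝ | u ∈ Set.Icc (1/4 : ℝ) (1/2) ∧ |(((1:ℕ):ℝ)+1)*u - D| ≤ ε}
          ≤ ENNReal.ofReal ε := by
        refine le_trans (measure_mono (?_ : _ ⊆ Set.Icc ((D-ε)/2) ((D+ε)/2))) ?_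
        · rintro u ⟨hu, habs⟩
          norm_num at habs
          have h := abs_le.1 habs
          refine Set.mem_Icc.2 ⟨by linarith [h.1], by linarith [h.2]⟩
        · rw [Real.volume_Icc]
          exact ENNReal.ofReal_le_ofReal (by linarith)
      calc _ ≤ ENNReal.ofReal (2*ε) + ENNReal.ofReal ε := add_le_add h0 h1
      _ = ENNReal.ofReal (3*ε) := by
          rw [← ENNReal.ofReal_add (by linarith) (by linarith)]; ring_nf
    · intro q hq
      have hq2 : 2 ≤ q := by simp at hq; omega
      have hq2' : (2:ℝ) ≤ (q:ℝ) := by exact_mod_cast hq2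
      have : {u : ℝ | u ∈ Set.Icc (1/4 : ℝ) (1/2) ∧ |((q:ℝ)+1)*u - D| ≤ ε} = ∅ := by
        refine Set.eq_empty_iff_forall_notMem.2 ?_
        rintro u ⟨⟨hu1, hu2⟩, habs⟩
        have h := abs_le.1 habs
        nlinarith [mul_nonneg (by linarith : (0:ℝ) ≤ (q:ℝ)-2) (by linarith : (0:ℝ) ≤ u), h.2]
      rw [this, measure_empty]
  · push_neg at hD
    set A : ℝ := 2*(D-ε) with hAdef
    have hA : 1 < A := by simp only [hAdef]; linarith
    set a : ℕ := ⌈A⌉₊ with hadef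
    have ha : 1 < a := Nat.lt_ceil.2 (by exact_mod_cast hA)
    have haA : A ≤ (a:ℝ) := Nat.le_ceil A
    have haA' : (a:ℝ) < A + 1 := Nat.ceil_lt_add_one (by linarith)
    have haR : (2:ℝ) ≤ (a:ℝ) := by exact_mod_cast ha
    rw [tsum_eq_sum (s := Finset.Icc (a-1) (2*a-1)) ?_]
    · refine le_trans (Finset.sum_le_sum (g := fun _ => ENNReal.ofReal (2*ε/(a:ℝ))) (fun q hq => ?_)) ?_
      · -- each term ≤ ofReal (2ε/a)
        have hqmem := Finset.mem_Icc.1 hq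
        have hq1 : a ≤ q + 1 := by omega
        have hq1R : (a:ℝ) ≤ (q:ℝ) + 1 := by exact_mod_cast hq1
        refine le_trans (measure_mono (?_ :
          _ ⊆ Set.Icc ((D-ε)/((q:ℝ)+1)) ((D+ε)/((q:ℝ)+1)))) ?_
        · rintro u ⟨hu, habs⟩
          have h := abs_le.1 habs
          refine Set.mem_Icc.2 ⟨?_, ?_⟩
          · rw [div_le_iff₀ (by positivity)]; nlinarith [h.1]
          · rw [le_div_iff₀ (by positivity)]; nlinarith [h.2]
        · rw [Real.volume_Icc]
          refine ENNReal.ofReal_le_ofReal ?_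
          have he : (D+ε)/((q:ℝ)+1) - (D-ε)/((q:ℝ)+1) = 2*ε/((q:ℝ)+1) := by
            field_simp; ring
          rw [he]
          gcongr
      · rw [Finset.sum_const]
        have hcard : (Finset.Icc (a-1) (2*a-1)).card = a + 1 := by
          rw [Nat.card_Icc]; omega
        rw [hcard, nsmul_eq_mul, ← ENNReal.ofReal_natCast (a+1),
          ← ENNReal.ofReal_mul (by positivity)]
        refine ENNReal.ofReal_le_ofReal ?_
        push_cast
        rw [mul_comm, div_mul_eq_mul_div, div_le_iff₀ (by linarith : (0:ℝ) < (a:ℝ))]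
        nlinarith [hε.le]
    · intro q hq
      have hnot := Finset.mem_Icc.not.1 hq
      have : {u : ℝ | u ∈ Set.Icc (1/4 : ℝ) (1/2) ∧ |((q:ℝ)+1)*u - D| ≤ ε} = ∅ := by
        refine Set.eq_empty_iff_forall_notMem.2 ?_
        rintro u ⟨⟨hu1, hu2⟩, habs⟩
        have h := abs_le.1 habs
        rcases (by omega : q + 2 ≤ a ∨ 2*a ≤ q) with hlow | hhigh
        · have hlowR : (q:ℝ) + 2 ≤ (a:ℝ) := by exact_mod_cast hlow
          nlinarith [mul_le_mul_of_nonneg_left hu2 (by positivity : (0:ℝ) ≤ (q:ℝ)+1), h.1]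
        · have hhighR : 2*(a:ℝ) ≤ (q:ℝ) := by exact_mod_cast hhigh
          nlinarith [mul_le_mul_of_nonneg_left hu1 (by positivity : (0:ℝ) ≤ (q:ℝ)+1), h.2]
      rw [this, measure_empty]

set_option maxHeartbeats 1000000 in
theorem stmt3 (S t : ℕ) (ht : 0 < t) (hts : t ≤ S) (M ζ : ℝ) (hM : 0 < M) (hζ0 : 0 < ζ)
    (θ ζv : Fin t → ℝ) (hζv : ∀ i, 0 < ζv i)
    (hdisj : ∀ i j : Fin t, i ≠ j →
      Disjoint (Set.Icc (θ i - ζv i / M) (θ i + ζv i / M))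
               (Set.Icc (θ j - ζv j / M) (θ j + ζv j / M)))
    (hsum : ∑ i, ζv i ≤ S * ζ)
    (hζ : ζ ≤ 1 / (8 * (S : ℝ) * (2 * (S : ℝ) - 1))) :
    ∃ m ∈ Set.Icc (2 : ℝ) 4, ∀ q : ℤ, q ≠ 0 →
      (∀ i j : Fin t,
        Disjoint (Set.Icc (θ i - ζv i / M - q / (M * m)) (θ i + ζv i / M - q / (M * m)))
                 (Set.Icc (θ j - ζv j / M) (θ j + ζv j / M))) ∧
      ((fun x => x + (q : ℝ) / (M * m)) '' (⋃ i, Set.Icc (θ i - ζv i / M) (θ i + ζv i / M))) ∩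
        (⋃ i, Set.Icc (θ i - ζv i / M) (θ i + ζv i / M)) = ∅ := by
  classical
  -- basic numeric facts
  have hS1 : (1:ℝ) ≤ (S:ℝ) := by exact_mod_cast Nat.one_le_iff_ne_zero.2 (by omega)
  have hSζ : (S:ℝ) * ζ ≤ 1 / (8*(2*(S:ℝ)-1)) := by
    have h1 : (0:ℝ) < 8*(2*(S:ℝ)-1) := by linarith
    rw [le_div_iff₀ h1]
    have hS0 : (S:ℝ) ≠ 0 := by linarith
    have h2 : (2*(S:ℝ)-1) ≠ 0 := by linarith
    calc (S:ℝ) * ζ * (8*(2*(S:ℝ)-1)) ≤ (S:ℝ) * (1 / (8*(S:ℝ)*(2*(S:ℝ)-1))) * (8*(2*(S:ℝ)-1)) := by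
          gcongr
      _ = 1 := by field_simp; exact div_self (by linarith)
  have hζv_le : ∀ i, ζv i ≤ (S:ℝ)*ζ := fun i =>
    le_trans (Finset.single_le_sum (fun j _ => (hζv j).le) (Finset.mem_univ i)) hsum
  have hZ0 : (0:ℝ) ≤ ∑ i, ζv i := Finset.sum_nonneg (fun i _ => (hζv i).le)
  -- the bad set
  set T : Fin t × Fin t → ℕ → Set ℝ := fun p q =>
    {u : ℝ | u ∈ Set.Icc (1/4 : ℝ) (1/2) ∧
      |((q:ℝ)+1)*u - M*(θ p.1 - θ p.2)| ≤ ζv p.1 + ζv p.2} with hT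
  set c : Fin t × Fin t → ℝ := fun p =>
    if 0 < M*(θ p.1 - θ p.2) then 3*(ζv p.1 + ζv p.2) else 0 with hc
  have hc_nonneg : ∀ p, 0 ≤ c p := by
    intro p; rw [hc]; dsimp only; split_ifs
    · have := hζv p.1; have := hζv p.2; linarith
    · exact le_rfl
  -- per-pair measure bound
  have hTp : ∀ p : Fin t × Fin t, volume (⋃ q : ℕ, T p q) ≤ ENNReal.ofReal (c p) := by
    intro p
    by_cases hp : 0 < M*(θ p.1 - θ p.2)
    · rw [hc]; dsimp only; rw [if_pos hp]
      have hne : p.1 ≠ p.2 := by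
        intro h
        rw [h] at hp; simp at hp
      have ht2 : 2 ≤ t := by
        have h1 := p.1.isLt; have h2 := p.2.isLt
        have : p.1.val ≠ p.2.val := fun hh => hne (Fin.ext hh)
        omega
      have hS2 : (2:ℝ) ≤ (S:ℝ) := by exact_mod_cast le_trans ht2 hts
      have hεp : ζv p.1 + ζv p.2 ≤ 1/24 := by
        have hp2 : ζv p.1 + ζv p.2 ≤ ∑ i, ζv i := by
          rw [← Finset.sum_pair hne]
          exact Finset.sum_le_sum_of_subset_of_nonneg (Finset.subset_univ _)
            (fun i _ _ => (hζv i).le)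
        have h24 : 1/(8*(2*(S:ℝ)-1)) ≤ 1/24 :=
          one_div_le_one_div_of_le (by norm_num) (by linarith)
        linarith [hsum, hSζ]
      refine le_trans (measure_iUnion_le _) ?_
      have := pair_bound (M*(θ p.1 - θ p.2)) (ζv p.1 + ζv p.2)
        (by linarith [hζv p.1, hζv p.2]) hεp
      exact this
    · rw [hc]; dsimp only; rw [if_neg hp]
      have hsub : (⋃ q : ℕ, T p q) ⊆ {(1/4 : ℝ)} := by
        rintro u hu
        simp only [Set.mem_iUnion] at hu
        obtain ⟨q, hus, habs⟩ := hu
        have hD0 : M*(θ p.1 - θ p.2) ≤ 0 := not_lt.1 hp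
        have hεp4 : ζv p.1 + ζv p.2 ≤ 1/4 := by
          have h8 : (S:ℝ)*ζ ≤ 1/8 := by
            have : 1/(8*(2*(S:ℝ)-1)) ≤ 1/8 :=
              one_div_le_one_div_of_le (by norm_num) (by linarith)
            linarith
          linarith [hζv_le p.1, hζv_le p.2]
        have h := abs_le.1 habs
        have hus' := Set.mem_Icc.1 hus
        have hqu : u ≤ ((q:ℝ)+1)*u := by
          nlinarith [mul_nonneg (Nat.cast_nonneg q : (0:ℝ) ≤ (q:ℝ))
            (by linarith [hus'.1] : (0:ℝ) ≤ u)]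
        have : u = 1/4 := le_antisymm (by linarith [h.2, hus'.1]) hus'.1
        simp [this]
      calc volume (⋃ q : ℕ, T p q) ≤ volume {(1/4:ℝ)} := measure_mono hsub
        _ = 0 := Real.volume_singleton
        _ ≤ ENNReal.ofReal 0 := by simp
  -- sum of c is < 1/4
  have hsum_c : ∑ p : Fin t × Fin t, c p < 1/4 := by
    have hθne : ∀ i j : Fin t, i ≠ j → θ i ≠ θ j := by
      intro i j hij hθ
      have hmem1 : θ i ∈ Set.Icc (θ i - ζv i / M) (θ i + ζv i / M) := by
        constructor <;> [linarith [div_pos (hζv i) hM]; linarith [div_pos (hζv i) hM]]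
      have hmem2 : θ i ∈ Set.Icc (θ j - ζv j / M) (θ j + ζv j / M) := by
        rw [← hθ]
        constructor <;> [linarith [div_pos (hζv j) hM]; linarith [div_pos (hζv j) hM]]
      exact Set.disjoint_left.1 (hdisj i j hij) hmem1 hmem2
    have hswap : ∑ p : Fin t × Fin t, c p.swap = ∑ p : Fin t × Fin t, c p :=
      Fintype.sum_equiv (Equiv.prodComm _ _) _ _ (fun p => rfl)
    have hpairb : ∀ p : Fin t × Fin t, c p + c p.swap ≤
        (if p.1 = p.2 then 0 else 3*(ζv p.1 + ζv p.2)) := by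
      intro p
      by_cases hd : p.1 = p.2
      · rw [if_pos hd, hc]
        dsimp only [Prod.fst_swap, Prod.snd_swap]
        simp only [hd]
        simp
      · rw [if_neg hd, hc]
        dsimp only [Prod.fst_swap, Prod.snd_swap]
        have hDne : M*(θ p.1 - θ p.2) ≠ 0 := by
          intro h
          rcases mul_eq_zero.1 h with h' | h'
          · exact absurd h' (ne_of_gt hM)
          · exact hθne p.1 p.2 hd (by linarith [sub_eq_zero.1 h'])
        rcases lt_or_gt_of_ne hDne with hneg | hpos
        · rw [if_neg (by linarith), if_pos (by nlinarith)]
          linarith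
        · rw [if_pos hpos, if_neg (by nlinarith)]
          linarith
    have hdouble : 2 * (∑ p : Fin t × Fin t, c p) ≤
        ∑ p : Fin t × Fin t, (if p.1 = p.2 then 0 else 3*(ζv p.1 + ζv p.2)) := by
      rw [two_mul]
      nth_rewrite 2 [← hswap]
      rw [← Finset.sum_add_distrib]
      exact Finset.sum_le_sum (fun p _ => hpairb p)
    have hval : ∑ p : Fin t × Fin t, (if p.1 = p.2 then 0 else 3*(ζv p.1 + ζv p.2))
        = 6 * ((t:ℝ) - 1) * (∑ i, ζv i) := by
      rw [Fintype.sum_prod_type]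
      have hinner : ∀ i : Fin t, ∑ j, (if i = j then (0:ℝ) else 3*(ζv i + ζv j))
          = 3 * ((t:ℝ) * ζv i + ∑ k, ζv k) - 6 * ζv i := by
        intro i
        have hrw : ∀ j : Fin t, (if i = j then (0:ℝ) else 3*(ζv i + ζv j))
            = 3*(ζv i + ζv j) - (if i = j then 3*(ζv i + ζv j) else 0) := by
          intro j; split_ifs <;> ring
        rw [Finset.sum_congr rfl (fun j _ => hrw j), Finset.sum_sub_distrib,
          Finset.sum_ite_eq]
        simp only [Finset.mem_univ, if_true]
        have : ∑ j, 3*(ζv i + ζv j) = 3 * ((t:ℝ) * ζv i + ∑ k, ζv k) := by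
          rw [← Finset.mul_sum, Finset.sum_add_distrib, Finset.sum_const,
            Finset.card_univ, Fintype.card_fin, nsmul_eq_mul]
        rw [this]; ring
      rw [Finset.sum_congr rfl (fun i _ => hinner i)]
      have e2 : ∀ x : Fin t, 3 * ((t:ℝ) * ζv x + ∑ k, ζv k) - 6 * ζv x
          = (3*(t:ℝ) - 6) * ζv x + 3 * ∑ k, ζv k := fun x => by ring
      rw [Finset.sum_congr rfl (fun x _ => e2 x), Finset.sum_add_distrib,
        ← Finset.mul_sum, Finset.sum_const, Finset.card_univ, Fintype.card_fin,
        nsmul_eq_mul]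
      ring
    have htR : (1:ℝ) ≤ (t:ℝ) := by exact_mod_cast ht
    have htS : (t:ℝ) ≤ (S:ℝ) := by exact_mod_cast hts
    have h3 : 3*((t:ℝ)-1)*(∑ i, ζv i) ≤ 3*((S:ℝ)-1)*((S:ℝ)*ζ) :=
      mul_le_mul (by linarith) hsum hZ0 (by linarith)
    have h8 : (0:ℝ) < 8*(S:ℝ)*(2*(S:ℝ)-1) := by nlinarith
    have hkey : ζ * (8*(S:ℝ)*(2*(S:ℝ)-1)) ≤ 1 := by
      rw [← le_div_iff₀ h8]; exact hζ
    have hfin : 3*((S:ℝ)-1)*((S:ℝ)*ζ) < 1/4 := by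
      nlinarith [mul_pos (mul_pos (by linarith : (0:ℝ) < (S:ℝ))
        (by linarith : (0:ℝ) < (S:ℝ))) hζ0,
        mul_pos (by linarith : (0:ℝ) < (S:ℝ)) hζ0]
    rw [hval] at hdouble
    linarith
  -- total bad measure < 1/4
  have hBadlt : volume (⋃ p : Fin t × Fin t, ⋃ q : ℕ, T p q) < ENNReal.ofReal (1/4) := by
    calc volume (⋃ p : Fin t × Fin t, ⋃ q : ℕ, T p q)
        ≤ ∑' p : Fin t × Fin t, volume (⋃ q : ℕ, T p q) := measure_iUnion_le _
      _ = ∑ p : Fin t × Fin t, volume (⋃ q : ℕ, T p q) := tsum_fintype _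
      _ ≤ ∑ p : Fin t × Fin t, ENNReal.ofReal (c p) :=
          Finset.sum_le_sum (fun p _ => hTp p)
      _ = ENNReal.ofReal (∑ p : Fin t × Fin t, c p) :=
          (ENNReal.ofReal_sum_of_nonneg (fun p _ => hc_nonneg p)).symm
      _ < ENNReal.ofReal (1/4) := by
          exact (ENNReal.ofReal_lt_ofReal_iff (by norm_num)).2 hsum_c
  -- extract a good u
  obtain ⟨u, huI, huB⟩ : ∃ u, u ∈ Set.Icc (1/4:ℝ) (1/2) ∧
      u ∉ ⋃ p : Fin t × Fin t, ⋃ q : ℕ, T p q := by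
    by_contra h
    push_neg at h
    have hsub : Set.Icc (1/4:ℝ) (1/2) ⊆ ⋃ p : Fin t × Fin t, ⋃ q : ℕ, T p q := h
    have h14 : ENNReal.ofReal (1/4) ≤ volume (⋃ p : Fin t × Fin t, ⋃ q : ℕ, T p q) := by
      rw [show (1:ℝ)/4 = 1/2 - 1/4 by norm_num, ← Real.volume_Icc]
      exact measure_mono hsub
    exact absurd hBadlt (not_lt.2 h14)
  obtain ⟨hu14, hu12⟩ := huI
  have hu0 : (0:ℝ) < u := by linarith
  have huinv : u * u⁻¹ = 1 := mul_inv_cancel₀ (ne_of_gt hu0)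
  have huinv0 : (0:ℝ) < u⁻¹ := inv_pos.2 hu0
  refine ⟨u⁻¹, ⟨by nlinarith, by nlinarith⟩, ?_⟩
  have hrw : ∀ qq : ℤ, (qq:ℝ)/(M * u⁻¹) = qq*u/M := by
    intro qq
    rw [div_eq_div_iff (by positivity) (ne_of_gt hM)]
    field_simp
  -- master disjointness claim
  have claim : ∀ (q : ℤ), q ≠ 0 → ∀ i j : Fin t,
      Disjoint (Set.Icc (θ i - ζv i / M - q*u/M) (θ i + ζv i / M - q*u/M))
               (Set.Icc (θ j - ζv j / M) (θ j + ζv j / M)) := by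
    intro q hq i j
    rw [Set.disjoint_left]
    intro x hx1 hx2
    have hx1' := Set.mem_Icc.1 hx1
    have hx2' := Set.mem_Icc.1 hx2
    have h1 : θ i - ζv i/M - (q:ℝ)*u/M ≤ θ j + ζv j/M := le_trans hx1'.1 hx2'.2
    have h2 : θ j - ζv j/M ≤ θ i + ζv i/M - (q:ℝ)*u/M := le_trans hx2'.1 hx1'.2
    have hMne : M ≠ 0 := ne_of_gt hM
    have h1' := mul_le_mul_of_nonneg_right h1 hM.le
    have h2' := mul_le_mul_of_nonneg_right h2 hM.le
    rw [sub_mul, sub_mul, add_mul, div_mul_cancel₀ _ hMne, div_mul_cancel₀ _ hMne,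
      div_mul_cancel₀ _ hMne] at h1'
    rw [sub_mul, sub_mul, add_mul, div_mul_cancel₀ _ hMne, div_mul_cancel₀ _ hMne,
      div_mul_cancel₀ _ hMne] at h2'
    have habs : |(q:ℝ)*u - M*(θ i - θ j)| ≤ ζv i + ζv j :=
      abs_le.2 ⟨by nlinarith, by nlinarith⟩
    apply huB
    rcases lt_or_gt_of_ne hq with hqneg | hqpos
    · refine Set.mem_iUnion.2 ⟨(j, i), Set.mem_iUnion.2 ⟨(-q-1).toNat, ?_⟩⟩
      have hn : (((-q-1).toNat : ℝ) + 1) = -(q:ℝ) := by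
        have : ((-q-1).toNat : ℤ) = -q-1 := Int.toNat_of_nonneg (by omega)
        have h' : (((-q-1).toNat : ℤ) : ℝ) = ((-q-1 : ℤ) : ℝ) := by exact_mod_cast this
        push_cast at h' ⊢
        linarith
      refine ⟨Set.mem_Icc.2 ⟨hu14, hu12⟩, ?_⟩
      rw [hn, show -(q:ℝ)*u - M*(θ j - θ i) = -((q:ℝ)*u - M*(θ i - θ j)) by ring, abs_neg]
      linarith [habs]
    · refine Set.mem_iUnion.2 ⟨(i, j), Set.mem_iUnion.2 ⟨(q-1).toNat, ?_⟩⟩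
      have hn : (((q-1).toNat : ℝ) + 1) = (q:ℝ) := by
        have : ((q-1).toNat : ℤ) = q-1 := Int.toNat_of_nonneg (by omega)
        have h' : (((q-1).toNat : ℤ) : ℝ) = ((q-1 : ℤ) : ℝ) := by exact_mod_cast this
        push_cast at h' ⊢
        linarith
      refine ⟨Set.mem_Icc.2 ⟨hu14, hu12⟩, ?_⟩
      rw [hn]
      exact habs
  intro q hq
  constructor
  · intro i j
    rw [hrw q]
    exact claim q hq i j
  · rw [Set.eq_empty_iff_forall_notMem]
    rintro x ⟨hx1, hx2⟩
    obtain ⟨y, hy, rfl⟩ := hx1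
    obtain ⟨si, ⟨i, rfl⟩, hyi⟩ := hy
    obtain ⟨sj, ⟨j, rfl⟩, hxj⟩ := hx2
    have hyi' := Set.mem_Icc.1 hyi
    have hmem : y + (q:ℝ)/(M*u⁻¹) ∈
        Set.Icc (θ i - ζv i / M - ((-q : ℤ):ℝ)*u/M) (θ i + ζv i / M - ((-q : ℤ):ℝ)*u/M) := by
      rw [hrw q] at *
      push_cast
      rw [show -(q:ℝ) * u / M = -((q:ℝ)*u/M) by ring]
      constructor
      · linarith [hyi'.1]
      · linarith [hyi'.2]
    exact Set.disjoint_left.1 (claim (-q) (neg_ne_zero.2 hq) i j) hmem hxj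
end

section
/- Let S ≥ 2, M > 0, ζ ≤ 1/(8S(2S-1)), and let θ_i, θ_j, ζ_i, ζ_j be reals with ζ_i, ζ_j > 0 and ζ_i + ζ_j ≤ Sζ, and θ_i > θ_j. Define R = { m ∈ [2,4] : ∃ q ∈ ℤ \ {0}, |θ_i - θ_j - q/(Mm)| ≤ (ζ_i + ζ_j)/M }. Then the Lebesgue measure of R is at most 32(ζ_i + ζ_j)/(1 - 8(ζ_i + ζ_j)). -/
set_option maxHeartbeats 1000000 in
theorem stmt4 (S : ℕ) (hS : 2 ≤ S) (M ζ : ℝ) (hM : 0 < M) (hζ : 0 < ζ)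
    (hζS : ζ ≤ 1 / (8 * (S : ℝ) * (2 * (S : ℝ) - 1)))
    (θi θj ζi ζj : ℝ) (hθ : θj < θi) (hζi : 0 < ζi) (hζj : 0 < ζj)
    (hsum : ζi + ζj ≤ S * ζ) :
    MeasureTheory.volume {m : ℝ | m ∈ Set.Icc (2 : ℝ) 4 ∧
        ∃ q : ℤ, q ≠ 0 ∧ |θi - θj - (q : ℝ) / (M * m)| ≤ (ζi + ζj) / M} ≤
      ENNReal.ofReal (32 * (ζi + ζj) / (1 - 8 * (ζi + ζj))) := by
  set ε := ζi + ζj with hεdef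
  have hε : 0 < ε := by positivity
  have hs2 : (2 : ℝ) ≤ (S : ℝ) := by exact_mod_cast hS
  have hε24 : ε ≤ 1 / 24 := by
    have hpos : (0 : ℝ) < 8 * (S : ℝ) * (2 * (S : ℝ) - 1) := by nlinarith
    rw [le_div_iff₀ hpos] at hζS
    nlinarith [mul_pos hζ (show (0:ℝ) < (S:ℝ) by linarith)]
  set t := M * (θi - θj) with htdef
  have ht0 : 0 < t := mul_pos hM (by linarith)
  set R := {m : ℝ | m ∈ Set.Icc (2 : ℝ) 4 ∧
      ∃ q : ℤ, q ≠ 0 ∧ |θi - θj - (q : ℝ) / (M * m)| ≤ ε / M} with hRdef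
  have key : ∀ m : ℝ, m ∈ R →
      ∃ q : ℤ, 1 ≤ q ∧ (q : ℝ) ≤ (t + ε) * m ∧ (t - ε) * m ≤ (q : ℝ) := by
    rintro m ⟨⟨hm2, hm4⟩, q, hq0, hq⟩
    have hm0 : (0 : ℝ) < m := by linarith
    have hMm : 0 < M * m := by positivity
    have habs : |t * m - (q : ℝ)| ≤ ε * m := by
      have e : t * m - (q : ℝ) = (θi - θj - (q : ℝ) / (M * m)) * (M * m) := by
        field_simp; ring
      rw [e, abs_mul, abs_of_pos hMm]
      calc |θi - θj - (q : ℝ) / (M * m)| * (M * m) ≤ ε / M * (M * m) :=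
            mul_le_mul_of_nonneg_right hq hMm.le
        _ = ε * m := by field_simp
    rw [abs_le] at habs
    obtain ⟨hl, hr⟩ := habs
    have hεm : ε * m ≤ 1 / 6 := by nlinarith
    have hq1 : 1 ≤ q := by
      by_contra h
      push_neg at h
      have hq' : q ≤ -1 := by omega
      have hqr : (q : ℝ) ≤ -1 := by exact_mod_cast hq'
      nlinarith [mul_pos ht0 hm0]
    exact ⟨q, hq1, by nlinarith, by nlinarith⟩
  have hmem : ∀ m : ℝ, m ∈ R → 2 ≤ m ∧ m ≤ 4 := by
    rintro m ⟨⟨hm2, hm4⟩, -⟩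
    exact ⟨hm2, hm4⟩
  clear_value ε t R
  by_cases hcase : t < 1 / 4 - ε
  · have hempty : R = ∅ := by
      rw [Set.eq_empty_iff_forall_notMem]
      intro m hm
      obtain ⟨q, hq1, hqle, -⟩ := key m hm
      obtain ⟨hm2, hm4⟩ := hmem m hm
      have hqr : (1 : ℝ) ≤ (q : ℝ) := by exact_mod_cast hq1
      nlinarith [mul_pos (show (0:ℝ) < t + ε by linarith) (show (0:ℝ) < m by linarith)]
    rw [hempty]
    simp
  · push_neg at hcase
    have hta : (0 : ℝ) < t - ε := by linarith
    have htb : (0 : ℝ) < t + ε := by linarith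
    set N : ℤ := ⌊4 * (t + ε)⌋ with hN
    have hNle : (N : ℝ) ≤ 4 * (t + ε) := Int.floor_le _
    have hNup : ∀ q : ℤ, (q : ℝ) ≤ 4 * (t + ε) → q ≤ N := fun q h => Int.le_floor.mpr h
    clear_value N
    have hsub : R ⊆
        ⋃ q ∈ Finset.Icc (1 : ℤ) N, Set.Icc ((q : ℝ) / (t + ε)) ((q : ℝ) / (t - ε)) := by
      intro m hm
      obtain ⟨q, hq1, hqle, hqge⟩ := key m hm
      obtain ⟨hm2, hm4⟩ := hmem m hm
      have hqN : q ≤ N := by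
        refine hNup q ?_
        have h1 : (t + ε) * m ≤ (t + ε) * 4 := mul_le_mul_of_nonneg_left hm4 htb.le
        linarith
      refine Set.mem_biUnion (Finset.mem_Icc.mpr ⟨hq1, hqN⟩) ?_
      constructor
      · rw [div_le_iff₀ htb]; linarith
      · rw [le_div_iff₀ hta]; linarith
    refine le_trans (MeasureTheory.measure_mono hsub) ?_
    refine le_trans (MeasureTheory.measure_biUnion_finset_le _ _) ?_
    have hstep1 : ∀ q ∈ Finset.Icc (1 : ℤ) N,
        MeasureTheory.volume (Set.Icc ((q : ℝ) / (t + ε)) ((q : ℝ) / (t - ε))) ≤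
          ENNReal.ofReal (8 * ε / (t - ε)) := by
      intro q hq
      rw [Finset.mem_Icc] at hq
      rw [Real.volume_Icc]
      apply ENNReal.ofReal_le_ofReal
      have hq1 : (1 : ℝ) ≤ (q : ℝ) := by exact_mod_cast hq.1
      have hq4 : (q : ℝ) ≤ 4 * (t + ε) := by
        have : (q : ℝ) ≤ (N : ℝ) := by exact_mod_cast hq.2
        linarith
      have e : (q : ℝ) / (t - ε) - (q : ℝ) / (t + ε)
          = (q : ℝ) * (2 * ε) / ((t - ε) * (t + ε)) := by
        field_simp; ring
      rw [e, div_le_div_iff₀ (by positivity) hta]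
      nlinarith [mul_pos hta htb, mul_pos hε hta]
    refine le_trans (Finset.sum_le_sum hstep1) ?_
    rw [Finset.sum_const, nsmul_eq_mul]
    have hcard : ((Finset.Icc (1 : ℤ) N).card : ℝ) ≤ 4 * (t + ε) := by
      rw [Int.card_Icc]
      rcases le_or_gt 0 N with h | h
      · have h1 : ((N + 1 - 1).toNat : ℤ) = N := by omega
        have h2 : (((N + 1 - 1).toNat : ℤ) : ℝ) = (N : ℝ) := by exact_mod_cast h1
        push_cast at h2 ⊢
        rw [h2]; exact hNle
      · have h1 : (N + 1 - 1).toNat = 0 := by omega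
        rw [h1]
        push_cast
        positivity
    have hmul : ((Finset.Icc (1 : ℤ) N).card : ENNReal) * ENNReal.ofReal (8 * ε / (t - ε))
        = ENNReal.ofReal (((Finset.Icc (1 : ℤ) N).card : ℝ) * (8 * ε / (t - ε))) := by
      rw [ENNReal.ofReal_mul (by positivity)]
      simp
    rw [hmul]
    apply ENNReal.ofReal_le_ofReal
    have h8 : (0 : ℝ) < 1 - 8 * ε := by linarith
    have hstep : ((Finset.Icc (1 : ℤ) N).card : ℝ) * (8 * ε / (t - ε))
        ≤ 4 * (t + ε) * (8 * ε / (t - ε)) :=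
      mul_le_mul_of_nonneg_right hcard (by positivity)
    refine hstep.trans ?_
    rw [show 4 * (t + ε) * (8 * ε / (t - ε)) = (4 * (t + ε) * (8 * ε)) / (t - ε) by ring,
      div_le_div_iff₀ hta h8]
    nlinarith [mul_nonneg (mul_nonneg hε.le hε.le)
      (show (0:ℝ) ≤ 4 * t + 4 * ε - 1 by linarith)]
end

section
/- For every integer n ≥ 1, the n-th prime p_n satisfies p_n ≤ 2n(log n + 1), where log is the natural logarithm and p₁ = 2. -/
lemma cb_le_pow (m : ℕ) :
    Nat.centralBinom m ≤ (2*m) ^ (Nat.count Nat.Prime (2*m+1)) := by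
  rcases Nat.eq_zero_or_pos m with rfl | hm
  · norm_num [Nat.centralBinom, show Nat.count Nat.Prime 1 = 0 from by decide]
  have hN := Nat.centralBinom_ne_zero m
  have h2m : 0 < 2*m := by omega
  have hfac : ∀ p, p ^ (Nat.centralBinom m).factorization p ≤ 2*m := by
    intro p
    rw [Nat.centralBinom_eq_two_mul_choose]
    exact Nat.pow_factorization_choose_le h2m
  calc Nat.centralBinom m
      = ∏ p ∈ (Nat.centralBinom m).primeFactors, p ^ (Nat.centralBinom m).factorization p := by
        conv_lhs => rw [← Nat.factorization_prod_pow_eq_self hN]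
        exact Nat.prod_factorization_eq_prod_primeFactors _
    _ ≤ (2*m) ^ (Nat.centralBinom m).primeFactors.card :=
        Finset.prod_le_pow_card _ _ _ fun p _ => hfac p
    _ ≤ (2*m) ^ (Nat.count Nat.Prime (2*m+1)) := by
        apply Nat.pow_le_pow_right (by omega)
        rw [Nat.count_eq_card_filter_range]
        apply Finset.card_le_card
        intro p hp
        have hpp := Nat.prime_of_mem_primeFactors hp
        have hpos : (Nat.centralBinom m).factorization p ≠ 0 :=
          Finsupp.mem_support_iff.mp (by rw [Nat.support_factorization]; exact hp)
        have h1 : p ≤ 2*m := le_trans (Nat.le_self_pow hpos p) (hfac p)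
        simp only [Finset.mem_filter, Finset.mem_range]
        exact ⟨by omega, hpp⟩

lemma log_le_div_e {x : ℝ} (hx : 0 < x) : Real.log x ≤ x / Real.exp 1 := by
  have h := Real.log_le_sub_one_of_pos (x := x / Real.exp 1) (by positivity)
  rw [Real.log_div hx.ne' (Real.exp_ne_zero 1), Real.log_exp] at h
  linarith

theorem stmt6 (n : ℕ) (hn : 1 ≤ n) :
    (Nat.nth Nat.Prime (n - 1) : ℝ) ≤ 2 * n * (Real.log n + 1) := by
  rcases lt_or_ge n 5 with h5 | h5
  · interval_cases n
    · simp [Nat.nth_prime_zero_eq_two, Real.log_one]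
    · have hl : (0:ℝ) ≤ Real.log 2 := Real.log_nonneg (by norm_num)
      rw [show (2:ℕ) - 1 = 1 from rfl, Nat.nth_prime_one_eq_three]
      push_cast; nlinarith
    · have h : Nat.nth Nat.Prime 2 = 5 := by
        have : Nat.count Nat.Prime 5 = 2 := by decide
        rw [← this]; exact Nat.nth_count (by norm_num)
      have hl : (0:ℝ) ≤ Real.log 3 := Real.log_nonneg (by norm_num)
      rw [show (3:ℕ) - 1 = 2 from rfl, h]
      push_cast; nlinarith
    · have h : Nat.nth Nat.Prime 3 = 7 := by
        have : Nat.count Nat.Prime 7 = 3 := by decide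
        rw [← this]; exact Nat.nth_count (by norm_num)
      have hl : (0:ℝ) ≤ Real.log 4 := Real.log_nonneg (by norm_num)
      rw [show (4:ℕ) - 1 = 3 from rfl, h]
      push_cast; nlinarith
  -- main case : n ≥ 5
  set L : ℝ := Real.log n with hLdef
  have hn5 : (5:ℝ) ≤ (n:ℝ) := by exact_mod_cast h5
  have hL0 : 0 ≤ L := Real.log_nonneg (by linarith)
  set B : ℝ := 2 * n * (L + 1) with hBdef
  have hB10 : (10:ℝ) ≤ B := by nlinarith
  set X : ℕ := ⌊B⌋₊ with hXdef
  have hXB : (X:ℝ) ≤ B := Nat.floor_le (by linarith)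
  have hBX : B < (X:ℝ) + 1 := Nat.lt_floor_add_one B
  have hX10 : 10 ≤ X := Nat.le_floor (by exact_mod_cast hB10)
  set m : ℕ := X / 2 with hmdef
  have hm4 : 4 ≤ m := by omega
  have h2mX : 2*m ≤ X ∧ X ≤ 2*m + 1 := by omega
  have hyB : B - 2 ≤ ((2*m : ℕ):ℝ) := by
    have h1 : ((X:ℕ):ℝ) ≤ ((2*m:ℕ):ℝ) + 1 := by exact_mod_cast h2mX.2
    linarith
  have hyB2 : ((2*m : ℕ):ℝ) ≤ B := le_trans (by exact_mod_cast h2mX.1) hXB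
  have hy0 : (0:ℝ) < ((2*m : ℕ):ℝ) := by
    have : 0 < 2*m := by omega
    exact_mod_cast this
  -- numeric constants
  have hl2 : (0.6931:ℝ) < Real.log 2 := lt_trans (by norm_num) Real.log_two_gt_d9
  have hl2' : Real.log 2 < 0.6932 := lt_trans Real.log_two_lt_d9 (by norm_num)
  have hE : (2.7182:ℝ) < Real.exp 1 := lt_trans (by norm_num) Real.exp_one_gt_d9
  -- bound log(L+1)
  have hlogL : Real.log (L+1) ≤ 0.368 * (L+1) := by
    have h1 := log_le_div_e (x := L+1) (by linarith)
    have h2 : (L+1) / Real.exp 1 ≤ 0.368 * (L+1) := by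
      rw [div_le_iff₀ (by linarith)]
      nlinarith
    linarith
  -- bound log B
  have hlogB : Real.log B ≤ Real.log 2 + L + 0.368 * (L+1) := by
    have hB : B = 2 * ((n:ℝ) * (L+1)) := by rw [hBdef]; ring
    rw [hB, Real.log_mul (by norm_num) (by positivity),
      Real.log_mul (by positivity) (by linarith)]
    linarith
  -- key inequality : n * log(2m) ≤ (2m) * log 2
  have hkey : (n:ℝ) * Real.log ((2*m : ℕ):ℝ) ≤ ((2*m : ℕ):ℝ) * Real.log 2 := by
    have hlogy : Real.log ((2*m : ℕ):ℝ) ≤ Real.log B :=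
      Real.log_le_log hy0 hyB2
    have hub : Real.log ((2*m : ℕ):ℝ) ≤ Real.log 2 + L + 0.368 * (L+1) := by linarith
    have hlb : (B - 2) * Real.log 2 ≤ ((2*m : ℕ):ℝ) * Real.log 2 := by
      apply mul_le_mul_of_nonneg_right hyB (by linarith)
    have hn0 : (0:ℝ) < (n:ℝ) := by linarith
    have step : (n:ℝ) * Real.log ((2*m : ℕ):ℝ) ≤
        (n:ℝ) * (Real.log 2 + L + 0.368 * (L+1)) :=
      mul_le_mul_of_nonneg_left hub (by linarith)
    have main : (n:ℝ) * (Real.log 2 + L + 0.368 * (L+1)) ≤ (B - 2) * Real.log 2 := by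
      rw [hBdef]
      nlinarith [mul_nonneg (mul_nonneg hn0.le hL0) (show (0:ℝ) ≤ 2*Real.log 2 - 1.368 by linarith),
        mul_le_mul_of_nonneg_right hn5 (show (0:ℝ) ≤ Real.log 2 - 0.368 by linarith)]
    linarith
  -- in ℕ : (2m)^n ≤ 4^m
  have hnat : (2*m)^n ≤ 4^m := by
    have hr : (((2*m)^n : ℕ):ℝ) ≤ ((4^m : ℕ):ℝ) := by
      push_cast
      rw [← Real.log_le_log_iff (by positivity) (by positivity),
        Real.log_pow, Real.log_pow,
        show (4:ℝ) = 2^2 by norm_num, Real.log_pow]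
      push_cast
      calc (n:ℝ) * Real.log (2*(m:ℝ)) = (n:ℝ) * Real.log ((2*m : ℕ):ℝ) := by push_cast; ring_nf
        _ ≤ ((2*m : ℕ):ℝ) * Real.log 2 := hkey
        _ = (m:ℝ) * ((2:ℕ):ℝ) * Real.log 2 := by push_cast; ring
        _ = (m:ℝ) * (((2:ℕ):ℝ) * Real.log 2) := by ring
    exact_mod_cast hr
  -- count of primes below 2m+1 is at least n
  have hcount : n - 1 < Nat.count Nat.Prime (2*m+1) := by
    by_contra hc
    push_neg at hc
    have h4 := Nat.four_pow_lt_mul_centralBinom m (by omega)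
    have hcb := cb_le_pow m
    have hchain : m * Nat.centralBinom m ≤ (2*m)^n :=
      calc m * Nat.centralBinom m ≤ m * (2*m) ^ (Nat.count Nat.Prime (2*m+1)) :=
            Nat.mul_le_mul_left m hcb
        _ ≤ (2*m) * (2*m) ^ (n-1) :=
            Nat.mul_le_mul (by omega) (Nat.pow_le_pow_right (by omega) hc)
        _ = (2*m) ^ (n-1+1) := by rw [pow_succ]; ring
        _ = (2*m) ^ n := by congr 1; omega
    exact absurd (lt_of_lt_of_le h4 (hchain.trans hnat)) (lt_irrefl _)
  have hlt : Nat.nth Nat.Prime (n-1) < 2*m+1 := Nat.nth_lt_of_lt_count hcount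
  have : (Nat.nth Nat.Prime (n-1) : ℝ) ≤ ((2*m : ℕ):ℝ) := by
    exact_mod_cast Nat.le_of_lt_succ hlt
  calc (Nat.nth Nat.Prime (n-1) : ℝ) ≤ ((2*m : ℕ):ℝ) := this
    _ ≤ B := hyB2
    _ = 2 * n * (Real.log n + 1) := by rw [hBdef]
end

section
/- Let E_{ℓ-1} ⊂ ℝ/ℤ be a union of at most S disjoint arcs with total torus measure at most Sη/M_{ℓ-1}, where M_{ℓ-1} is a positive integer, and suppose η < 1/(3S p_{S(S-1)/2} p_{S(S-1)/2+1}) where p_n is the n-th prime. Then there exists a prime m ∈ {p₁, ..., p_{S(S-1)/2+1}} such that (B_𝕋(E_{ℓ-1}, η/M_{ℓ-1}) + q/(m M_{ℓ-1})) ∩ B_𝕋(E_{ℓ-1}, η/M_{ℓ-1}) = ∅ mod 1 for every integer q with m ∤ q. -/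
open scoped BigOperators

set_option maxHeartbeats 1000000


/-- The `n`-th prime number (`nthPrime 1 = 2`), with the convention `nthPrime 0 = 1`. -/
noncomputable def nthPrime (n : ℕ) : ℕ := if n = 0 then 1 else Nat.nth Nat.Prime (n - 1)

lemma nthPrime_prime {l : ℕ} (hl : 1 ≤ l) : (nthPrime l).Prime := by
  unfold nthPrime
  rw [if_neg (by omega)]
  exact Nat.prime_nth_prime _

lemma one_le_nthPrime (l : ℕ) : 1 ≤ nthPrime l := by
  rcases Nat.eq_zero_or_pos l with h | h
  · simp [nthPrime, h]
  · exact (nthPrime_prime h).one_lt.le.trans' (by norm_num)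

lemma nthPrime_mono {a b : ℕ} (ha : 1 ≤ a) (hab : a ≤ b) : nthPrime a ≤ nthPrime b := by
  unfold nthPrime
  rw [if_neg (by omega), if_neg (by omega)]
  exact (Nat.nth_le_nth Nat.infinite_setOf_prime).mpr (by omega)

lemma nthPrime_ne {a b : ℕ} (ha : 1 ≤ a) (hb : 1 ≤ b) (hne : a ≠ b) :
    nthPrime a ≠ nthPrime b := by
  unfold nthPrime
  rw [if_neg (by omega), if_neg (by omega)]
  intro h
  have := Nat.nth_injective Nat.infinite_setOf_prime h
  omega

lemma frac_lb {M p : ℕ} (hM : 0 < M) (hp : 0 < p) (q N : ℤ) (hq : ¬ ((p:ℤ) ∣ q)) :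
    1 / ((p:ℝ) * M) ≤ |(q:ℝ) / ((p:ℝ) * M) - N| := by
  have hpM : (0:ℝ) < (p:ℝ) * M := by positivity
  have hne : q - N * p * M ≠ 0 := by
    intro h
    exact hq ⟨N * M, by linear_combination h⟩
  have key : (q:ℝ) / ((p:ℝ) * M) - N = ((q - N * p * M : ℤ) : ℝ) / ((p:ℝ) * M) := by
    field_simp
    push_cast
    ring
  rw [key, abs_div, abs_of_pos hpM]
  have h1 : (1:ℝ) ≤ |((q - N * p * M : ℤ) : ℝ)| := by
    rw [← Int.cast_abs]
    exact_mod_cast Int.one_le_abs hne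
  gcongr

lemma frac_lb2 {M p p' : ℕ} (hM : 0 < M) (hp : p.Prime) (hp' : p'.Prime) (hpp : p ≠ p')
    (q q' N : ℤ) (hq : ¬ ((p:ℤ) ∣ q)) (e : ℤ) (he : e = 1 ∨ e = -1) :
    1 / ((p:ℝ) * p' * M) ≤ |(q:ℝ) / ((p:ℝ) * M) + e * ((q':ℝ) / ((p':ℝ) * M)) - N| := by
  have hpM : (0:ℝ) < (p:ℝ) * p' * M := by
    have := hp.pos; have := hp'.pos; positivity
  set n : ℤ := q * p' + e * q' * p - N * p * p' * M with hn
  have hpZ : Prime (p:ℤ) := Nat.prime_iff_prime_int.mp hp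
  have hndvd : ¬ ((p:ℤ) ∣ n) := by
    intro h
    have h1 : (p:ℤ) ∣ q * p' := by
      have h2 : (p:ℤ) ∣ e * q' * p := ⟨e * q', by ring⟩
      have h3 : (p:ℤ) ∣ N * p * p' * M := ⟨N * p' * M, by ring⟩
      have := h.add h3
      have h4 : (p:ℤ) ∣ q * p' + e * q' * p := by
        have : n + N * p * p' * M = q * p' + e * q' * p := by ring
        exact this ▸ (h.add h3)
      have := (dvd_sub h4 h2)
      simpa using this
    rcases hpZ.dvd_mul.mp h1 with h | h
    · exact hq h
    · have : (p : ℤ) ∣ (p' : ℤ) := h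
      rw [Int.natCast_dvd_natCast] at this
      exact hpp ((Nat.prime_dvd_prime_iff_eq hp hp').mp this)
  have hne : n ≠ 0 := fun h => hndvd (h ▸ dvd_zero _)
  have key : (q:ℝ) / ((p:ℝ) * M) + e * ((q':ℝ) / ((p':ℝ) * M)) - N = ((n : ℤ) : ℝ) / ((p:ℝ) * p' * M) := by
    have := hp.pos; have := hp'.pos
    rw [hn]
    field_simp
    push_cast
    ring
  rw [key, abs_div, abs_of_pos hpM]
  have h1 : (1:ℝ) ≤ |((n : ℤ) : ℝ)| := by
    rw [← Int.cast_abs]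
    exact_mod_cast Int.one_le_abs hne
  gcongr


lemma dist_coe_exists {r w u : ℝ} (h : dist ((w : AddCircle (1:ℝ))) ((u : AddCircle (1:ℝ))) ≤ r) :
    ∃ n : ℤ, |w - u - n| ≤ r := by
  refine ⟨round (w - u), ?_⟩
  have h1 : ((w : AddCircle (1:ℝ))) - ((u : AddCircle (1:ℝ))) = (((w - u : ℝ)) : AddCircle (1:ℝ)) := (AddCircle.coe_sub _ _ _).symm
  rw [dist_eq_norm, h1, AddCircle.norm_eq] at h
  simpa using h

lemma extract_data {t : ℕ} (cc dd : Fin t → ℝ) (r c : ℝ)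
    (h : ¬ Disjoint
      ((fun x => x + ((c : ℝ) : AddCircle (1:ℝ))) ''
        (⋃ x ∈ (⋃ i, (fun x : ℝ => (x : AddCircle (1:ℝ))) '' Set.Icc (cc i) (dd i)),
          Metric.closedBall x r))
      (⋃ x ∈ (⋃ i, (fun x : ℝ => (x : AddCircle (1:ℝ))) '' Set.Icc (cc i) (dd i)),
        Metric.closedBall x r)) :
    ∃ (i j : Fin t) (u v : ℝ) (n : ℤ), u ∈ Set.Icc (cc i) (dd i) ∧ v ∈ Set.Icc (cc j) (dd j) ∧
      |c - (v - u) - n| ≤ 2 * r := by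
  rw [Set.not_disjoint_iff] at h
  obtain ⟨z, hz1, hz2⟩ := h
  obtain ⟨z0, hz0, rfl⟩ := hz1
  rw [Set.mem_iUnion₂] at hz0 hz2
  obtain ⟨x, hx, hz0b⟩ := hz0
  obtain ⟨y, hy, hz2b⟩ := hz2
  rw [Set.mem_iUnion] at hx hy
  obtain ⟨i, u, hu, rfl⟩ := hx
  obtain ⟨j, v, hv, rfl⟩ := hy
  obtain ⟨w, rfl⟩ := QuotientAddGroup.mk_surjective z0
  obtain ⟨n1, hn1⟩ := dist_coe_exists (Metric.mem_closedBall.mp hz0b)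
  have hz2c : dist (((w + c : ℝ) : AddCircle (1:ℝ))) ((v : AddCircle (1:ℝ))) ≤ r := by
    have : ((w : AddCircle (1:ℝ))) + ((c : ℝ) : AddCircle (1:ℝ)) = (((w + c : ℝ)) : AddCircle (1:ℝ)) := (AddCircle.coe_add _ _ _).symm
    rw [← this]
    exact Metric.mem_closedBall.mp hz2b
  obtain ⟨n2, hn2⟩ := dist_coe_exists hz2c
  refine ⟨i, j, u, v, n2 - n1, hu, hv, ?_⟩
  have hc : (((n2 - n1 : ℤ)) : ℝ) = (n2 : ℝ) - n1 := by push_cast; ring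
  rw [hc]
  have : c - (v - u) - ((n2 : ℝ) - n1) = (w + c - v - n2) - (w - u - n1) := by ring
  rw [this]
  calc |(w + c - v - n2) - (w - u - n1)| ≤ |w + c - v - n2| + |w - u - n1| := abs_sub _ _
    _ ≤ r + r := add_le_add hn2 hn1
    _ = 2 * r := by ring


theorem stmt14 (S M : ℕ) (hS : 1 ≤ S) (hM : 0 < M) (η : ℝ) (hη : 0 < η)
    (hηS : η < 1 / (3 * (S : ℝ) * (nthPrime (S * (S - 1) / 2) : ℝ) *
      (nthPrime (S * (S - 1) / 2 + 1) : ℝ)))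
    (t : ℕ) (htS : t ≤ S) (cc dd : Fin t → ℝ) (hcd : ∀ i, cc i ≤ dd i)
    (E : Set (AddCircle (1 : ℝ)))
    (hE : E = ⋃ i, (fun x : ℝ => (x : AddCircle (1 : ℝ))) '' Set.Icc (cc i) (dd i))
    (hdisj : ∀ i j, i ≠ j →
      Disjoint ((fun x : ℝ => (x : AddCircle (1 : ℝ))) '' Set.Icc (cc i) (dd i))
               ((fun x : ℝ => (x : AddCircle (1 : ℝ))) '' Set.Icc (cc j) (dd j)))
    (hlen : ∑ i, (dd i - cc i) ≤ S * η / M) :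
    ∃ l : ℕ, 1 ≤ l ∧ l ≤ S * (S - 1) / 2 + 1 ∧
      ∀ q : ℤ, ¬ ((nthPrime l : ℤ) ∣ q) →
        Disjoint
          ((fun x => x + (((q : ℝ) / ((nthPrime l : ℝ) * M) : ℝ) : AddCircle (1 : ℝ))) ''
            (⋃ x ∈ E, Metric.closedBall x (η / M)))
          (⋃ x ∈ E, Metric.closedBall x (η / M)) := by
  classical
  by_contra hcon
  push_neg at hcon
  set K := S * (S - 1) / 2 with hK
  have hM' : (0:ℝ) < M := by exact_mod_cast hM
  set PK : ℝ := (nthPrime K : ℝ) with hPKdef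
  set PK1 : ℝ := (nthPrime (K + 1) : ℝ) with hPK1def
  have hPK : (1:ℝ) ≤ PK := by rw [hPKdef]; exact_mod_cast one_le_nthPrime K
  have hPK1 : (1:ℝ) ≤ PK1 := by rw [hPK1def]; exact_mod_cast one_le_nthPrime (K+1)
  have hS' : (1:ℝ) ≤ S := by exact_mod_cast hS
  have hkey : η * (3 * S * PK * PK1) < 1 := by
    have hpos : (0:ℝ) < 3 * S * PK * PK1 := by positivity
    rw [lt_div_iff₀ hpos] at hηS
    linarith
  have hlen' : ∀ i : Fin t, dd i - cc i ≤ S * η / M := fun i =>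
    le_trans (Finset.single_le_sum (fun k _ => sub_nonneg.mpr (hcd k)) (Finset.mem_univ i)) hlen
  -- extract data for each l
  have H : ∀ l : Fin (K+1), ∃ (q : ℤ) (i j : Fin t) (u v : ℝ) (n : ℤ),
      ¬ ((nthPrime ((l:ℕ)+1) : ℤ) ∣ q) ∧ u ∈ Set.Icc (cc i) (dd i) ∧ v ∈ Set.Icc (cc j) (dd j) ∧
      |(q:ℝ) / ((nthPrime ((l:ℕ)+1) : ℝ) * M) - (v - u) - n| ≤ 2 * (η / M) := by
    intro l
    have hlt := l.isLt
    obtain ⟨q, hq, hnd⟩ := hcon ((l:ℕ)+1) (by omega) (by omega)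
    rw [hE] at hnd
    obtain ⟨i, j, u, v, n0, hu, hv, hbd⟩ := extract_data cc dd (η/M) _ hnd
    exact ⟨q, i, j, u, v, n0, hq, hu, hv, hbd⟩
  choose q I J u v n hq hu hv hb using H
  -- the index-to-prime bounds
  have hidx : ∀ l : Fin (K+1), 1 ≤ (l:ℕ)+1 ∧ (l:ℕ)+1 ≤ K+1 := fun l => ⟨by omega, by have := l.isLt; omega⟩
  have hple : ∀ l : Fin (K+1), (nthPrime ((l:ℕ)+1) : ℝ) ≤ PK1 := by
    intro l
    rw [hPK1def]
    exact_mod_cast nthPrime_mono (hidx l).1 (hidx l).2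
  have hppos : ∀ l : Fin (K+1), (0:ℝ) < (nthPrime ((l:ℕ)+1) : ℝ) := by
    intro l
    exact_mod_cast (nthPrime_prime (hidx l).1).pos
  -- no diagonal pairs
  have hIJ : ∀ l : Fin (K+1), I l ≠ J l := by
    intro l heq
    set p : ℕ := nthPrime ((l:ℕ)+1) with hpdef
    have hp := nthPrime_prime (hidx l).1
    have h1 := frac_lb hM hp.pos (q l) (n l) (hq l)
    have hu' := hu l
    have hv' := hv l
    rw [heq] at hu'
    have hvu : |v l - u l| ≤ S * η / M := by
      have hll := hlen' (J l)
      obtain ⟨h1u, h2u⟩ := hu'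
      obtain ⟨h1v, h2v⟩ := hv'
      rw [abs_le]
      constructor <;> linarith
    have htri : |(q l : ℝ) / ((p:ℝ) * M) - n l| ≤ 2 * (η / M) + S * η / M := by
      have heqr : (q l : ℝ) / ((p:ℝ) * M) - n l =
          ((q l : ℝ) / ((p:ℝ) * M) - (v l - u l) - n l) + (v l - u l) := by ring
      rw [heqr]
      exact (abs_add_le _ _).trans (add_le_add (hb l) hvu)
    -- 1/(pM) ≤ (2η + Sη)/M, so 1/p ≤ 3Sη, so 1 ≤ 3Sηp ≤ 3Sη PK PK1 < 1
    have hp' : (0:ℝ) < (p:ℝ) := hppos l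
    have hple' : (p:ℝ) ≤ PK * PK1 := le_trans (hple l) (le_mul_of_one_le_left (by linarith) hPK)
    have hA : 1 / ((p:ℝ) * M) ≤ (2 * η + S * η) / M := by
      calc 1 / ((p:ℝ) * M) ≤ |(q l : ℝ) / ((p:ℝ) * M) - n l| := h1
        _ ≤ 2 * (η / M) + S * η / M := htri
        _ = (2 * η + S * η) / M := by ring
    have hB : 1 / (p:ℝ) ≤ 2 * η + S * η := by
      calc 1 / (p:ℝ) = (M:ℝ) * (1 / ((p:ℝ) * M)) := by field_simp
        _ ≤ (M:ℝ) * ((2 * η + S * η) / M) := by gcongr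
        _ = 2 * η + S * η := by field_simp
    have hC : 1 ≤ (2 * η + S * η) * (p:ℝ) := by
      rw [div_le_iff₀ hp'] at hB
      linarith
    have hD : (2 * η + S * η) * (p:ℝ) ≤ 3 * S * η * (PK * PK1) := by
      have h23 : 2 * η + S * η ≤ 3 * S * η := by nlinarith
      have hnn : (0:ℝ) ≤ 2 * η + S * η := by positivity
      calc (2 * η + S * η) * (p:ℝ) ≤ (2 * η + S * η) * (PK * PK1) :=
            mul_le_mul_of_nonneg_left hple' hnn
        _ ≤ 3 * S * η * (PK * PK1) :=
            mul_le_mul_of_nonneg_right h23 (by positivity)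
    have hfin : 3 * (S:ℝ) * η * (PK * PK1) = η * (3 * S * PK * PK1) := by ring
    linarith
  -- t ≥ 2
  have ht2 : 2 ≤ t := by
    by_contra h
    push_neg at h
    have hl0 := hIJ ⟨0, Nat.succ_pos K⟩
    apply hl0
    have h1 := (I ⟨0, Nat.succ_pos K⟩).isLt
    have h2 := (J ⟨0, Nat.succ_pos K⟩).isLt
    exact Fin.ext (by omega)
  -- pigeonhole on nondiagonal Sym2 pairs
  have hcard : Fintype.card {z : Sym2 (Fin t) // ¬ z.IsDiag} < Fintype.card (Fin (K+1)) := by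
    rw [Sym2.card_subtype_not_diag, Fintype.card_fin, Fintype.card_fin]
    calc t.choose 2 ≤ S.choose 2 := Nat.choose_le_choose 2 htS
      _ = K := by rw [Nat.choose_two_right]
      _ < K + 1 := Nat.lt_succ_self K
  obtain ⟨a, b, hab, hfab⟩ := Fintype.exists_ne_map_eq_of_card_lt
    (fun l : Fin (K+1) => (⟨s(I l, J l), by rw [Sym2.mk_isDiag_iff]; exact hIJ l⟩ :
      {z : Sym2 (Fin t) // ¬ z.IsDiag})) hcard
  have hsym : s(I a, J a) = s(I b, J b) := Subtype.ext_iff.mp hfab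
  rw [Sym2.eq_iff] at hsym
  -- distinct primes
  have habv : (a:ℕ)+1 ≠ (b:ℕ)+1 := fun h => hab (Fin.ext (by omega))
  have hpne : nthPrime ((a:ℕ)+1) ≠ nthPrime ((b:ℕ)+1) := nthPrime_ne (hidx a).1 (hidx b).1 habv
  have hpa := nthPrime_prime (hidx a).1
  have hpb := nthPrime_prime (hidx b).1
  -- product bound
  have hprodn : nthPrime ((a:ℕ)+1) * nthPrime ((b:ℕ)+1) ≤ nthPrime K * nthPrime (K+1) := by
    rcases lt_or_gt_of_ne (fun h : (a:ℕ) = (b:ℕ) => hab (Fin.ext h)) with h | h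
    · have h1 : (a:ℕ)+1 ≤ K := by have := b.isLt; omega
      exact Nat.mul_le_mul (nthPrime_mono (hidx a).1 h1) (nthPrime_mono (hidx b).1 (hidx b).2)
    · have h1 : (b:ℕ)+1 ≤ K := by have := a.isLt; omega
      rw [Nat.mul_comm]
      exact Nat.mul_le_mul (nthPrime_mono (hidx b).1 h1) (nthPrime_mono (hidx a).1 (hidx a).2)
  have hprod : (nthPrime ((a:ℕ)+1) : ℝ) * (nthPrime ((b:ℕ)+1) : ℝ) ≤ PK * PK1 := by
    rw [hPKdef, hPK1def]
    exact_mod_cast hprodn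
  -- pair length bound
  have hpair : (dd (I a) - cc (I a)) + (dd (J a) - cc (J a)) ≤ S * η / M := by
    have hsub : ∑ k ∈ ({I a, J a} : Finset (Fin t)), (dd k - cc k) ≤ ∑ k, (dd k - cc k) :=
      Finset.sum_le_sum_of_subset_of_nonneg (Finset.subset_univ _)
        (fun k _ _ => sub_nonneg.mpr (hcd k))
    rw [Finset.sum_pair (hIJ a)] at hsub
    linarith
  -- set up the combined bound in both cases
  set pa : ℕ := nthPrime ((a:ℕ)+1) with hpadef
  set pb : ℕ := nthPrime ((b:ℕ)+1) with hpbdef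
  have hmain : ∃ (e : ℤ) (N : ℤ), (e = 1 ∨ e = -1) ∧
      |(q a : ℝ) / ((pa:ℝ) * M) + (e:ℝ) * ((q b : ℝ) / ((pb:ℝ) * M)) - N| ≤
        (dd (I a) - cc (I a)) + (dd (J a) - cc (J a)) + 4 * (η / M) := by
    obtain ⟨h1, h2⟩ | ⟨h1, h2⟩ := hsym
    · -- same orientation : subtract
      refine ⟨-1, n a - n b, Or.inr rfl, ?_⟩
      have hba := hb a
      have hbb := hb b
      have hua := hu a; have hub := hu b
      have hva := hv a; have hvb := hv b
      rw [← h1] at hub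
      rw [← h2] at hvb
      have heq1 : (q a : ℝ) / ((pa:ℝ) * M) + ((-1 : ℤ):ℝ) * ((q b : ℝ) / ((pb:ℝ) * M)) - ((n a - n b : ℤ):ℝ) =
          ((q a : ℝ) / ((pa:ℝ) * M) - (v a - u a) - n a)
          - ((q b : ℝ) / ((pb:ℝ) * M) - (v b - u b) - n b)
          + (v a - v b) - (u a - u b) := by push_cast; ring
      rw [heq1]
      have e1 : |v a - v b| ≤ dd (J a) - cc (J a) := by
        rw [abs_le]; obtain ⟨x1,x2⟩ := hva; obtain ⟨y1,y2⟩ := hvb; constructor <;> linarith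
      have e2 : |u a - u b| ≤ dd (I a) - cc (I a) := by
        rw [abs_le]; obtain ⟨x1,x2⟩ := hua; obtain ⟨y1,y2⟩ := hub; constructor <;> linarith
      have a1 := abs_le.mp hba
      have a2 := abs_le.mp hbb
      have a3 := abs_le.mp e1
      have a4 := abs_le.mp e2
      rw [abs_le]
      constructor <;> linarith [a1.1, a1.2, a2.1, a2.2, a3.1, a3.2, a4.1, a4.2]
    · -- swapped orientation : add
      refine ⟨1, n a + n b, Or.inl rfl, ?_⟩
      have hba := hb a
      have hbb := hb b
      have hua := hu a; have hub := hu b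
      have hva := hv a; have hvb := hv b
      rw [← h2] at hub
      rw [← h1] at hvb
      have heq1 : (q a : ℝ) / ((pa:ℝ) * M) + ((1 : ℤ):ℝ) * ((q b : ℝ) / ((pb:ℝ) * M)) - ((n a + n b : ℤ):ℝ) =
          ((q a : ℝ) / ((pa:ℝ) * M) - (v a - u a) - n a)
          + ((q b : ℝ) / ((pb:ℝ) * M) - (v b - u b) - n b)
          + (v a - u b) + (v b - u a) := by push_cast; ring
      rw [heq1]
      have e1 : |v a - u b| ≤ dd (J a) - cc (J a) := by
        rw [abs_le]; obtain ⟨x1,x2⟩ := hva; obtain ⟨y1,y2⟩ := hub; constructor <;> linarith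
      have e2 : |v b - u a| ≤ dd (I a) - cc (I a) := by
        rw [abs_le]; obtain ⟨x1,x2⟩ := hvb; obtain ⟨y1,y2⟩ := hua; constructor <;> linarith
      have a1 := abs_le.mp hba
      have a2 := abs_le.mp hbb
      have a3 := abs_le.mp e1
      have a4 := abs_le.mp e2
      rw [abs_le]
      constructor <;> linarith [a1.1, a1.2, a2.1, a2.2, a3.1, a3.2, a4.1, a4.2]
  obtain ⟨e, N, he, hbd⟩ := hmain
  have hlb := frac_lb2 hM hpa hpb hpne (q a) (q b) N (hq a) e he
  -- final contradiction
  have hpa' : (0:ℝ) < (pa:ℝ) := hppos a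
  have hpb' : (0:ℝ) < (pb:ℝ) := hppos b
  have hA : 1 / ((pa:ℝ) * pb * M) ≤ (S * η + 4 * η) / M := by
    calc 1 / ((pa:ℝ) * pb * M) ≤ _ := hlb
      _ ≤ (dd (I a) - cc (I a)) + (dd (J a) - cc (J a)) + 4 * (η / M) := hbd
      _ ≤ S * η / M + 4 * (η / M) := by linarith
      _ = (S * η + 4 * η) / M := by ring
  have hB : 1 / ((pa:ℝ) * pb) ≤ S * η + 4 * η := by
    calc 1 / ((pa:ℝ) * pb) = (M:ℝ) * (1 / ((pa:ℝ) * pb * M)) := by field_simp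
      _ ≤ (M:ℝ) * ((S * η + 4 * η) / M) := by gcongr
      _ = S * η + 4 * η := by field_simp
  have hC : 1 ≤ (S * η + 4 * η) * ((pa:ℝ) * pb) := by
    rw [div_le_iff₀ (by positivity)] at hB
    linarith
  have hS2 : (2:ℝ) ≤ S := by exact_mod_cast le_trans ht2 htS
  have hD : (S * η + 4 * η) * ((pa:ℝ) * pb) ≤ 3 * S * η * (PK * PK1) := by
    have h23 : S * η + 4 * η ≤ 3 * S * η := by nlinarith
    have hnn : (0:ℝ) ≤ S * η + 4 * η := by positivity
    calc (S * η + 4 * η) * ((pa:ℝ) * pb) ≤ (S * η + 4 * η) * (PK * PK1) :=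
          mul_le_mul_of_nonneg_left hprod hnn
      _ ≤ 3 * S * η * (PK * PK1) :=
          mul_le_mul_of_nonneg_right h23 (by positivity)
  have hfin : 3 * (S:ℝ) * η * (PK * PK1) = η * (3 * S * PK * PK1) := by ring
  linarith
end
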